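/- arXiv:math/0210122 — 2 statements merged into one kernel-verified Lean document; each statement's English description precedes it below -/
import Mathlib

section
/- For every n ≥ 1, the Coxeter group of the type A_n Coxeter matrix is isomorphic to the symmetric group on n + 1 letters, via an isomorphism sending the i-th simple reflection r_i to the transposition (i, i+1). -/
open CoxeterMatrix CoxeterSystem Equiv Function

namespace AnIso

lemma comm_aux {G : Type*} [Group G] {a b : G} (ha : a * a = 1) (hb : b * b = 1)
    (h : (a * b) ^ 2 = 1) : a * b = b * a := by
  have h2 : (a * b) * (a * b) = 1 := by rw [← sq]; exact h
  have : a * b = (a * b)⁻¹ := by rw [eq_inv_iff_mul_eq_one]; exact h2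
  rw [this, mul_inv_rev, inv_eq_of_mul_eq_one_left ha, inv_eq_of_mul_eq_one_left hb]

lemma braid_aux {G : Type*} [Group G] {a b : G} (ha : a * a = 1) (hb : b * b = 1)
    (h : (a * b) ^ 3 = 1) : a * b * a = b * a * b := by
  have h2 : (a * b * a) * (b * a * b) = 1 := by
    have h' : a * b * (a * b * (a * b)) = 1 := by simpa [pow_succ, mul_assoc] using h
    calc (a * b * a) * (b * a * b) = a * b * (a * b * (a * b)) := by simp [mul_assoc]
    _ = 1 := h'
  have h3 : (b * a * b) * (b * a * b) = 1 := by
    have hb' : ∀ x : G, b * (b * x) = x := fun x => by rw [← mul_assoc, hb, one_mul]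
    have ha' : ∀ x : G, a * (a * x) = x := fun x => by rw [← mul_assoc, ha, one_mul]
    calc (b * a * b) * (b * a * b) = b * (a * (b * (b * (a * b)))) := by simp [mul_assoc]
    _ = b * (a * (a * b)) := by rw [hb']
    _ = b * b := by rw [ha']
    _ = 1 := hb
  exact mul_right_cancel (h2.trans h3.symm)

lemma swap_pow3 {α : Type*} [DecidableEq α] {a b c : α} (hab : a ≠ b) (hbc : b ≠ c)
    (hac : a ≠ c) : (Equiv.swap a b * Equiv.swap b c) ^ 3 = 1 := by
  have h1 : Equiv.swap a b * Equiv.swap b c * Equiv.swap a b = Equiv.swap a c := by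
    have h := Equiv.swap_mul_swap_mul_swap (x := c) (y := b) (z := a) hbc.symm hac.symm
    rw [Equiv.swap_comm b a, Equiv.swap_comm c b] at h
    exact h
  have h2 : Equiv.swap b c * Equiv.swap a b * Equiv.swap b c = Equiv.swap c a :=
    Equiv.swap_mul_swap_mul_swap hab hac
  calc (Equiv.swap a b * Equiv.swap b c) ^ 3
      = (Equiv.swap a b * Equiv.swap b c * Equiv.swap a b) *
        (Equiv.swap b c * Equiv.swap a b * Equiv.swap b c) := by simp [pow_succ, mul_assoc]
    _ = Equiv.swap a c * Equiv.swap c a := by rw [h1, h2]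
    _ = 1 := by rw [Equiv.swap_comm c a, Equiv.swap_mul_self]

lemma swap_disjoint_pow2 {α : Type*} [DecidableEq α] {a b c d : α}
    (hca : c ≠ a) (hcb : c ≠ b) (hda : d ≠ a) (hdb : d ≠ b) :
    (Equiv.swap a b * Equiv.swap c d) ^ 2 = 1 := by
  have h : Equiv.swap a b * Equiv.swap c d * (Equiv.swap a b)⁻¹ =
      Equiv.swap (Equiv.swap a b c) (Equiv.swap a b d) := by
    simp [Equiv.swap_apply_apply]
  rw [Equiv.swap_apply_of_ne_of_ne hca hcb, Equiv.swap_apply_of_ne_of_ne hda hdb] at h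
  have hcomm : Equiv.swap a b * Equiv.swap c d = Equiv.swap c d * Equiv.swap a b :=
    mul_inv_eq_iff_eq_mul.mp h
  rw [sq]
  nth_rewrite 2 [hcomm]
  calc Equiv.swap a b * Equiv.swap c d * (Equiv.swap c d * Equiv.swap a b)
      = Equiv.swap a b * (Equiv.swap c d * Equiv.swap c d) * Equiv.swap a b := by simp [mul_assoc]
    _ = 1 := by rw [Equiv.swap_mul_self, mul_one, Equiv.swap_mul_self]

abbrev csA (n : ℕ) : CoxeterSystem (Aₙ n) (Aₙ n).Group := (Aₙ n).toCoxeterSystem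

noncomputable abbrev ss (n : ℕ) (i : Fin n) : (Aₙ n).Group := (csA n).simple i

lemma Aₙ_apply {n : ℕ} (i j : Fin n) :
    Aₙ n i j = if i = j then 1 else if (j : ℕ) + 1 = i ∨ (i : ℕ) + 1 = j then 3 else 2 := rfl

lemma Aₙ_eq_three {n : ℕ} {i j : Fin n} (h : (i : ℕ) + 1 = j) : Aₙ n i j = 3 := by
  rw [Aₙ_apply]
  have : i ≠ j := by intro he; rw [he] at h; omega
  simp [this, h]

lemma Aₙ_eq_two {n : ℕ} {i j : Fin n} (h1 : (i : ℕ) + 1 < j ∨ (j : ℕ) + 1 < i) :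
    Aₙ n i j = 2 := by
  rw [Aₙ_apply]
  have h2 : i ≠ j := by intro he; rw [he] at h1; omega
  have h3 : ¬((j : ℕ) + 1 = i ∨ (i : ℕ) + 1 = j) := by omega
  simp [h2, h3]

variable {n : ℕ}

lemma ss_braid {i j : Fin n} (h : (i : ℕ) + 1 = j) :
    ss n i * ss n j * ss n i = ss n j * ss n i * ss n j :=
  braid_aux ((csA n).simple_mul_simple_self i) ((csA n).simple_mul_simple_self j)
    (Aₙ_eq_three h ▸ (csA n).simple_mul_simple_pow i j)

lemma ss_comm {i j : Fin n} (h : (i : ℕ) + 1 < j ∨ (j : ℕ) + 1 < i) :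
    ss n i * ss n j = ss n j * ss n i :=
  comm_aux ((csA n).simple_mul_simple_self i) ((csA n).simple_mul_simple_self j)
    (Aₙ_eq_two h ▸ (csA n).simple_mul_simple_pow i j)

/-- The embedding `W(Aₙ) →* W(Aₙ₊₁)` sending `sᵢ` to `sᵢ`. -/
noncomputable def φ (n : ℕ) : (Aₙ n).Group →* (Aₙ (n + 1)).Group :=
  (csA n).lift ⟨fun i => ss (n + 1) i.castSucc, by
    intro i j
    have he : Aₙ (n + 1) i.castSucc j.castSucc = Aₙ n i j := by
      rw [Aₙ_apply, Aₙ_apply]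
      simp [Fin.castSucc_inj]
    rw [← he]
    exact (csA (n + 1)).simple_mul_simple_pow i.castSucc j.castSucc⟩

@[simp] lemma φ_simple (i : Fin n) :
    φ n (ss n i) = ss (n + 1) i.castSucc :=
  (csA n).lift_apply_simple _ i

/-- `dd n j = s_j s_{j+1} ... s_n` in `W(Aₙ₊₁)`. -/
noncomputable def dd (n : ℕ) : ℕ → (Aₙ (n + 1)).Group
  | j => if h : j < n + 1 then ss (n + 1) ⟨j, h⟩ * dd n (j + 1) else 1
  termination_by j => n + 1 - j

lemma dd_of_ge {j : ℕ} (h : n + 1 ≤ j) : dd n j = 1 := by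
  rw [dd]; simp [Nat.not_lt.mpr h]

lemma dd_of_lt {j : ℕ} (h : j < n + 1) : dd n j = ss (n + 1) ⟨j, h⟩ * dd n (j + 1) := by
  conv_lhs => rw [dd]
  simp [h]

lemma ss_mul_dd_comm {i : Fin (n + 1)} : ∀ {j : ℕ}, (i : ℕ) + 1 < j →
    ss (n + 1) i * dd n j = dd n j * ss (n + 1) i := by
  suffices h : ∀ (k j : ℕ), n + 1 - j ≤ k → (i : ℕ) + 1 < j →
      ss (n + 1) i * dd n j = dd n j * ss (n + 1) i by
    intro j hj; exact h (n + 1 - j) j le_rfl hj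
  intro k
  induction k with
  | zero => intro j hk hj; rw [dd_of_ge (by omega)]; simp
  | succ k ih =>
    intro j hk hj
    rcases Nat.lt_or_ge j (n + 1) with h | h
    · rw [dd_of_lt h, ← mul_assoc, ss_comm (j := ⟨j, h⟩) (Or.inl hj), mul_assoc,
        ih (j + 1) (by omega) (by omega), ← mul_assoc]
    · rw [dd_of_ge h]; simp

lemma ss_mul_dd_braid {i : Fin (n + 1)} : ∀ {j : ℕ}, j < (i : ℕ) →
    ss (n + 1) i * dd n j = dd n j * ss (n + 1) ⟨(i : ℕ) - 1, by omega⟩ := by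
  suffices h : ∀ (k j : ℕ), (i : ℕ) - j ≤ k → j < (i : ℕ) →
      ss (n + 1) i * dd n j = dd n j * ss (n + 1) ⟨(i : ℕ) - 1, by omega⟩ by
    intro j hj; exact h ((i : ℕ) - j) j le_rfl hj
  intro k
  induction k with
  | zero => intro j hk hj; omega
  | succ k ih =>
    intro j hk hj
    have hjn : j < n + 1 := by omega
    rcases Nat.lt_or_ge (j + 1) (i : ℕ) with h | h
    · -- j + 1 < i : commute past s_j, use IH
      rw [dd_of_lt hjn, ← mul_assoc, ss_comm (i := i) (j := (⟨j, hjn⟩ : Fin (n + 1)))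
          (Or.inr (by simpa using h)), mul_assoc, ih (j + 1) (by omega) h, ← mul_assoc]
    · -- j + 1 = i : braid case
      have hji : j + 1 = (i : ℕ) := by omega
      have hin : (i : ℕ) < n + 1 := i.isLt
      have hi : ss (n + 1) i = ss (n + 1) ⟨j + 1, by omega⟩ := by
        congr 1; apply Fin.ext; simp; omega
      rw [dd_of_lt hjn, dd_of_lt (show j + 1 < n + 1 by omega)]
      have e1 : ss (n + 1) ⟨j + 1, by omega⟩ * (ss (n + 1) ⟨j, hjn⟩ *
          (ss (n + 1) ⟨j + 1, by omega⟩ * dd n (j + 1 + 1))) =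
          ss (n + 1) ⟨j, hjn⟩ * (ss (n + 1) ⟨j + 1, by omega⟩ *
          (ss (n + 1) ⟨j, hjn⟩ * dd n (j + 1 + 1))) := by
        have hb := ss_braid (n := n + 1) (i := (⟨j, hjn⟩ : Fin (n + 1)))
          (j := (⟨j + 1, by omega⟩ : Fin (n + 1))) (by simp)
        calc ss (n + 1) ⟨j + 1, by omega⟩ * (ss (n + 1) ⟨j, hjn⟩ *
            (ss (n + 1) ⟨j + 1, by omega⟩ * dd n (j + 1 + 1)))
            = (ss (n + 1) ⟨j + 1, by omega⟩ * ss (n + 1) ⟨j, hjn⟩ *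
              ss (n + 1) ⟨j + 1, by omega⟩) * dd n (j + 1 + 1) := by simp [mul_assoc]
          _ = (ss (n + 1) ⟨j, hjn⟩ * ss (n + 1) ⟨j + 1, by omega⟩ *
              ss (n + 1) ⟨j, hjn⟩) * dd n (j + 1 + 1) := by rw [← hb]
          _ = _ := by simp [mul_assoc]
      have e2 : ss (n + 1) ⟨j, hjn⟩ * dd n (j + 1 + 1) =
          dd n (j + 1 + 1) * ss (n + 1) ⟨j, hjn⟩ :=
        ss_mul_dd_comm (by simp)
      have hlast : (⟨(i : ℕ) - 1, by omega⟩ : Fin (n + 1)) = ⟨j, hjn⟩ := by ext; simp; omega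
      rw [hlast, hi]
      clear hi
      calc ss (n + 1) ⟨j + 1, by omega⟩ * (ss (n + 1) ⟨j, hjn⟩ *
          (ss (n + 1) ⟨j + 1, by omega⟩ * dd n (j + 1 + 1)))
          = ss (n + 1) ⟨j, hjn⟩ * (ss (n + 1) ⟨j + 1, by omega⟩ *
            (ss (n + 1) ⟨j, hjn⟩ * dd n (j + 1 + 1))) := e1
        _ = ss (n + 1) ⟨j, hjn⟩ * (ss (n + 1) ⟨j + 1, by omega⟩ *
            (dd n (j + 1 + 1) * ss (n + 1) ⟨j, hjn⟩)) := by rw [e2]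
        _ = ss (n + 1) ⟨j, hjn⟩ * (ss (n + 1) ⟨j + 1, by omega⟩ * dd n (j + 1 + 1)) *
            ss (n + 1) ⟨j, hjn⟩ := by simp [mul_assoc]

lemma ss_def (m : ℕ) (i : Fin m) : (csA m).simple i = ss m i := rfl

lemma decomp (w : (Aₙ (n + 1)).Group) :
    ∃ (j : ℕ) (u : (Aₙ n).Group), j ≤ n + 1 ∧ w = dd n j * φ n u := by
  refine (csA (n + 1)).simple_induction_left
    (p := fun w => ∃ (j : ℕ) (u : (Aₙ n).Group), j ≤ n + 1 ∧ w = dd n j * φ n u) w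
    ⟨n + 1, 1, le_rfl, by simp [dd_of_ge]⟩ ?_
  rintro w i ⟨j, u, hj, rfl⟩
  rw [ss_def]
  rcases Nat.lt_trichotomy ((i : ℕ) + 1) j with h | h | h
  · -- i + 1 < j
    have hin : (i : ℕ) < n := by omega
    have hcast : (Fin.castSucc (⟨(i : ℕ), hin⟩ : Fin n)) = i := by apply Fin.ext; simp
    refine ⟨j, ss n ⟨(i : ℕ), hin⟩ * u, hj, ?_⟩
    rw [map_mul, φ_simple, hcast, ← mul_assoc, ss_mul_dd_comm h, mul_assoc]
  · -- i + 1 = j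
    refine ⟨(i : ℕ), u, by omega, ?_⟩
    rw [dd_of_lt (j := (i : ℕ)) i.isLt, h, Fin.eta, mul_assoc]
  · rcases Nat.eq_or_lt_of_le (by omega : j ≤ (i : ℕ)) with h' | h'
    · -- j = i
      have hlt : j < n + 1 := by omega
      have hi : ss (n + 1) i = ss (n + 1) ⟨j, hlt⟩ := by
        congr 1; apply Fin.ext; simp [h']
      refine ⟨j + 1, u, by omega, ?_⟩
      rw [hi, dd_of_lt hlt, mul_assoc (ss (n + 1) ⟨j, hlt⟩) (dd n (j + 1)) (φ n u),
        (csA (n + 1)).simple_mul_simple_cancel_left]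
    · -- j < i
      have hin : (i : ℕ) - 1 < n := by have := i.isLt; omega
      have hcast : (Fin.castSucc (⟨(i : ℕ) - 1, hin⟩ : Fin n)) =
          (⟨(i : ℕ) - 1, by omega⟩ : Fin (n + 1)) := by apply Fin.ext; simp
      refine ⟨j, ss n ⟨(i : ℕ) - 1, hin⟩ * u, hj, ?_⟩
      rw [map_mul, φ_simple, hcast, ← mul_assoc, ss_mul_dd_braid h', mul_assoc]

lemma decomp_surj :
    Surjective (fun p : Fin (n + 2) × (Aₙ n).Group => dd n (p.1 : ℕ) * φ n p.2) := by
  intro w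
  obtain ⟨j, u, hj, rfl⟩ := decomp w
  exact ⟨(⟨j, by omega⟩, u), rfl⟩

lemma W_zero_subsingleton : Subsingleton (Aₙ 0).Group := by
  have h : ∀ w : (Aₙ 0).Group, w = 1 := fun w =>
    (csA 0).simple_induction (p := fun w => w = 1) w (fun i => i.elim0) rfl
      (fun w w' hw hw' => by rw [hw, hw', mul_one])
  exact ⟨fun a b => (h a).trans (h b).symm⟩

lemma W_finite_card : ∀ n : ℕ, Finite (Aₙ n).Group ∧ Nat.card (Aₙ n).Group ≤ Nat.factorial (n + 1) := by
  intro n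
  induction n with
  | zero =>
    have := W_zero_subsingleton
    refine ⟨Finite.of_subsingleton, ?_⟩
    simpa [Nat.factorial] using (Nat.card_le_one_iff_subsingleton _).mpr this
  | succ n ih =>
    obtain ⟨hfin, hcard⟩ := ih
    have hsurj := decomp_surj (n := n)
    have hfin' : Finite (Aₙ (n + 1)).Group := Finite.of_surjective _ hsurj
    refine ⟨hfin', ?_⟩
    have h1 := Nat.card_le_card_of_surjective _ hsurj
    have h2 : Nat.card (Fin (n + 2) × (Aₙ n).Group) = (n + 2) * Nat.card (Aₙ n).Group := by
      rw [Nat.card_prod, Nat.card_eq_fintype_card, Fintype.card_fin]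
    calc Nat.card (Aₙ (n + 1)).Group ≤ (n + 2) * Nat.card (Aₙ n).Group := h2 ▸ h1
      _ ≤ (n + 2) * Nat.factorial (n + 1) := Nat.mul_le_mul_left _ hcard
      _ = Nat.factorial (n + 2) := (Nat.factorial_succ (n + 1)).symm

lemma pow3_swap_comm {G : Type*} [Group G] {x y : G} (h : (x * y) ^ 3 = 1) :
    (y * x) ^ 3 = 1 := by
  have h2 : (y * x) ^ 3 * y = 1 * y := by
    rw [one_mul]
    calc (y * x) ^ 3 * y = y * (x * y) ^ 3 := by simp [pow_succ, mul_assoc]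
      _ = y := by rw [h, mul_one]
  exact mul_right_cancel h2

lemma fin_ne {m : ℕ} {a b : Fin m} (h : (a : ℕ) ≠ b) : a ≠ b :=
  fun he => h (by rw [he])

/-- The homomorphism to the symmetric group. -/
noncomputable def ff (n : ℕ) : (Aₙ n).Group →* Equiv.Perm (Fin (n + 1)) :=
  (csA n).lift ⟨fun i => Equiv.swap i.castSucc i.succ, by
    intro i j
    dsimp only
    by_cases h1 : i = j
    · subst h1
      rw [(Aₙ n).diagonal, pow_one, Equiv.swap_mul_self]
    · have hv : (i : ℕ) ≠ (j : ℕ) := fun h => h1 (Fin.ext h)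
      by_cases h2 : (i : ℕ) + 1 = j
      · rw [Aₙ_eq_three h2]
        have hbc : Fin.succ i = Fin.castSucc j := by apply Fin.ext; simp [← h2]
        rw [hbc]
        exact swap_pow3 (fin_ne (by simp only [Fin.coe_castSucc, Fin.val_succ]; omega)) (fin_ne (by simp only [Fin.coe_castSucc, Fin.val_succ]; omega)) (fin_ne (by simp only [Fin.coe_castSucc, Fin.val_succ]; omega))
      · by_cases h3 : (j : ℕ) + 1 = i
        · rw [(Aₙ n).symmetric, Aₙ_eq_three h3]
          have hbc : Fin.succ j = Fin.castSucc i := by apply Fin.ext; simp [← h3]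
          rw [hbc]
          exact pow3_swap_comm (swap_pow3 (fin_ne (by simp only [Fin.coe_castSucc, Fin.val_succ]; omega)) (fin_ne (by simp only [Fin.coe_castSucc, Fin.val_succ]; omega))
            (fin_ne (by simp only [Fin.coe_castSucc, Fin.val_succ]; omega)))
        · rw [Aₙ_eq_two (by omega)]
          exact swap_disjoint_pow2 (fin_ne (by simp only [Fin.coe_castSucc, Fin.val_succ]; omega)) (fin_ne (by simp only [Fin.coe_castSucc, Fin.val_succ]; omega))
            (fin_ne (by simp only [Fin.coe_castSucc, Fin.val_succ]; omega)) (fin_ne (by simp only [Fin.coe_castSucc, Fin.val_succ]; omega))⟩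

@[simp] lemma ff_simple (i : Fin n) :
    ff n (ss n i) = Equiv.swap i.castSucc i.succ :=
  (csA n).lift_apply_simple _ i

lemma ff_surjective : Surjective (ff n) := by
  have hcl := Equiv.Perm.mclosure_swap_castSucc_succ n
  intro σ
  have hle : Submonoid.closure (Set.range fun i : Fin n => Equiv.swap i.castSucc i.succ) ≤
      MonoidHom.mrange (ff n) := by
    rw [Submonoid.closure_le]
    rintro _ ⟨i, rfl⟩
    exact ⟨ss n i, ff_simple i⟩
  obtain ⟨w, hw⟩ := hle (hcl ▸ Submonoid.mem_top σ)
  exact ⟨w, hw⟩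

lemma ff_bijective : Bijective (ff n) := by
  obtain ⟨hfin, hcard⟩ := W_finite_card n
  apply (ff_surjective (n := n)).bijective_of_nat_card_le
  calc Nat.card (Aₙ n).Group ≤ Nat.factorial (n + 1) := hcard
    _ = Nat.card (Equiv.Perm (Fin (n + 1))) := by
        rw [Nat.card_eq_fintype_card, Fintype.card_perm, Fintype.card_fin]

end AnIso

/-!
STATEMENT 1: For every `n ≥ 1`, the Coxeter group of the type `Aₙ` Coxeter matrix is
isomorphic to the symmetric group on `n + 1` letters, via an isomorphism sending the `i`-th
simple reflection to the transposition `(i, i+1)`.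
-/

theorem coxeterGroup_Aₙ_mulEquiv_symmetricGroup (n : ℕ) (hn : 1 ≤ n) :
    ∃ e : (CoxeterMatrix.Aₙ n).Group ≃* Equiv.Perm (Fin (n + 1)),
      ∀ i : Fin n, e ((CoxeterMatrix.Aₙ n).simple i) = Equiv.swap i.castSucc i.succ := by
  refine ⟨MulEquiv.ofBijective (AnIso.ff n) AnIso.ff_bijective, fun i => ?_⟩
  have h : (CoxeterMatrix.Aₙ n).simple i = AnIso.ss n i := by
    rw [← AnIso.ss_def, CoxeterMatrix.toCoxeterSystem_simple]
  rw [h]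
  simpa using AnIso.ff_simple i
end

section
/- Let W be the Coxeter group of the type D_4 Coxeter matrix, with simple reflections r_a, r_b, r_d (the three outer nodes) and r_c (the central node). Let ρ be the (unique) automorphism of W with ρ(r_a) = r_b, ρ(r_b) = r_d, ρ(r_d) = r_a and ρ(r_c) = r_c, and let τ be the (unique) automorphism with τ(r_a) = r_b, τ(r_b) = r_a, τ(r_d) = r_d and τ(r_c) = r_c. Then the fixed subgroup {w ∈ W : ρ(w) = w} equals the subgroup {w ∈ W : ρ(w) = w and τ(w) = w}, and both are isomorphic to the Coxeter group of the type G_2 Coxeter matrix. -/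
/-!
Nodes are indexed `a = 0`, `c = 1`, `b = 2`, `d = 3`.

`W(G₂)` maps to `W(D₄)` by `s₀ ↦ r_c`, `s₁ ↦ r_a r_b r_d`. The relation
`(r_c r_a r_b r_d)⁶ = 1` comes from folding twice: the braid relations of the `A₃` on `b, c, d`
give the `B₂` relation `(r_c · r_b r_d)⁴ = 1`, and together with the `A₂` relation between `r_c`
and `r_a` this is a `B₃` configuration, whose Coxeter element has order 6. The map is injective
because the signed-permutation representation of `W(D₄)` separates the 12 elements of the
dihedral group `W(G₂)`, and its image is fixed by `ρ` and `τ` since `r_a, r_b, r_d` commute.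
Conversely, a coset enumeration writes every element of `W(D₄)` as `h · π ω` with `h` in the
image and `ω` one of 16 words; if this element is `ρ`-fixed then `π (ρ ω) = π ω`, which the
signed permutations rule out unless `ω` is empty.
-/

/-- The Coxeter matrix of type `D₄`: central node `1` joined to the three outer
nodes `0, 2, 3` with label 3; outer nodes mutually labelled 2. -/
def D4Mat : CoxeterMatrix (Fin 4) where
  M := !![1, 3, 2, 2;
          3, 1, 3, 3;
          2, 3, 1, 2;
          2, 3, 2, 1]
  off_diagonal := by intro i i' h; fin_cases i <;> fin_cases i' <;> simp_all

/-- The subgroup of elements fixed by a group automorphism. -/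
def fixedSubgroup {G : Type*} [Group G] (σ : G ≃* G) : Subgroup G where
  carrier := { w | σ w = w }
  one_mem' := map_one σ
  mul_mem' := by
    intro a b ha hb
    simp only [Set.mem_setOf_eq, map_mul] at *
    rw [ha, hb]
  inv_mem' := by
    intro a ha
    simp only [Set.mem_setOf_eq, map_inv] at *
    rw [ha]

section Involutions

variable {G : Type*} [Group G]

theorem pow_two_mul_eq_one_of_pow_eq {x y : G} (hx : x * x = 1) (hy : y * y = 1) {k : ℕ}
    (h : (x * y) ^ k = (y * x) ^ k) : (x * y) ^ (2 * k) = 1 := by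
  have hinv : (x * y)⁻¹ = y * x := by
    rw [mul_inv_rev, inv_eq_of_mul_eq_one_right hx, inv_eq_of_mul_eq_one_right hy]
  rw [two_mul, pow_add]
  nth_rw 2 [h]
  rw [← hinv, inv_pow, mul_inv_cancel]

theorem braid_four_of_braid_three {m p q : G}
    (hpq : p * q = q * p) (hmp : m * p * m = p * m * p) (hmq : m * q * m = q * m * q) :
    m * (p * q) * m * (p * q) = p * q * m * (p * q) * m := by
  have tpq := fun w => congrArg (· * w) hpq
  have tmp := fun w => congrArg (· * w) hmp
  have tmq := fun w => congrArg (· * w) hmq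
  -- with a trailing `* 1` every letter has a right neighbour `w`, so `tpq`, `tmp`, `tmq` apply
  -- anywhere in the word
  refine mul_right_cancel (b := 1) ?_
  simp only [mul_assoc] at tpq tmp tmq ⊢
  rw [tpq, ← tmp, tmq, ← tpq, ← tmq, tmp, ← tpq]

theorem braid_six_of_braid_three_four {m p u : G}
    (hpu : p * u = u * p) (hmp : m * p * m = p * m * p)
    (hmu : m * u * m * u = u * m * u * m) :
    (m * (p * u)) ^ 3 = (p * u * m) ^ 3 := by
  have tpu := fun w => congrArg (· * w) hpu
  have tmp := fun w => congrArg (· * w) hmp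
  have tmu := fun w => congrArg (· * w) hmu
  refine mul_right_cancel (b := 1) ?_
  simp only [pow_succ, pow_zero, one_mul, mul_assoc] at tpu tmp tmu ⊢
  nth_rw 2 [tpu]
  rw [← tmp, ← tmu, ← tpu, tmp, tpu, ← tmp, tmu, tpu, tmu, tmp, ← tpu]

end Involutions

namespace CoxeterSystem

variable {B W : Type*} [Group W] {M : CoxeterMatrix B} (cs : CoxeterSystem M W)

local prefix:100 "s" => cs.simple
local prefix:100 "π" => cs.wordProd

theorem simple_mul_simple_comm {i j : B} (h : M i j = 2) : s i * s j = s j * s i := by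
  have := cs.wordProd_braidWord_eq i j
  rw [braidWord, braidWord, ← M.symmetric i j, h] at this
  simpa [alternatingWord, wordProd] using this

theorem simple_braid {i j : B} (h : M i j = 3) : s i * s j * s i = s j * s i * s j := by
  have := cs.wordProd_braidWord_eq j i
  rw [braidWord, braidWord, ← M.symmetric i j, h] at this
  simpa [alternatingWord, wordProd, mul_assoc] using this

theorem simple_mul_simple_mul_comm {i j : B} (h : M i j = 2) (w : W) :
    s i * (s j * w) = s j * (s i * w) := by
  rw [← mul_assoc, cs.simple_mul_simple_comm h, mul_assoc]

theorem simple_mul_simple_mul_braid {i j : B} (h : M i j = 3) (w : W) :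
    s i * (s j * (s i * w)) = s j * (s i * (s j * w)) := by
  rw [← mul_assoc, ← mul_assoc, cs.simple_braid h, mul_assoc, mul_assoc]

theorem map_wordProd {F G : Type*} [Monoid G] [FunLike F W G] [MonoidHomClass F W G] (f : F)
    (ω : List B) : f (π ω) = (ω.map (f ∘ cs.simple)).prod := by
  simp [wordProd, map_list_prod, List.map_map]

theorem map_wordProd_of_simple {F : Type*} [FunLike F W W] [MonoidHomClass F W W] {f : F}
    {σ : B → B} (hf : ∀ i, f (s i) = s (σ i)) (ω : List B) : f (π ω) = π (ω.map σ) := by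
  rw [map_wordProd, wordProd, List.map_map]
  exact congrArg List.prod (List.map_congr_left fun i _ => hf i)

theorem exists_zpow_or_zpow_mul_simple (i j : B) (hB : ∀ k, k = i ∨ k = j) (w : W) :
    ∃ n : ℤ, w = (s i * s j) ^ n ∨ w = (s i * s j) ^ n * s i := by
  induction w using cs.simple_induction_right with
  | one => exact ⟨0, .inl (zpow_zero _).symm⟩
  | mul_simple_right w k ih =>
    obtain ⟨n, rfl | rfl⟩ := ih <;> rcases hB k with rfl | rfl
    · exact ⟨n, .inr rfl⟩
    · refine ⟨n - 1, .inr ?_⟩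
      rw [zpow_sub_one, mul_assoc, mul_inv_rev, cs.inv_simple, cs.inv_simple,
        cs.simple_mul_simple_cancel_right]
    · exact ⟨n, .inl (cs.simple_mul_simple_cancel_right _)⟩
    · exact ⟨n + 1, .inl (by rw [zpow_add_one, mul_assoc])⟩

end CoxeterSystem

namespace D4Mat

abbrev cs : CoxeterSystem D4Mat D4Mat.Group := D4Mat.toCoxeterSystem

abbrev cs₂ : CoxeterSystem CoxeterMatrix.G₂ CoxeterMatrix.G₂.Group :=
  CoxeterMatrix.G₂.toCoxeterSystem

local prefix:100 "s" => cs.simple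
local prefix:100 "π" => cs.wordProd

theorem comm_assoc (i j : Fin 4) (h : D4Mat.M i j = 2 := by decide) (w : D4Mat.Group) :
    s i * (s j * w) = s j * (s i * w) :=
  cs.simple_mul_simple_mul_comm h w

theorem braid_assoc (i j : Fin 4) (h : D4Mat.M i j = 3 := by decide) (w : D4Mat.Group) :
    s i * (s j * (s i * w)) = s j * (s i * (s j * w)) :=
  cs.simple_mul_simple_mul_braid h w

theorem braid_four_assoc (i j : Fin 4) (hij : D4Mat.M i j = 2 := by decide)
    (hi : D4Mat.M 1 i = 3 := by decide) (hj : D4Mat.M 1 j = 3 := by decide) (w : D4Mat.Group) :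
    s 1 * (s i * (s j * (s 1 * (s i * (s j * w))))) =
      s i * (s j * (s 1 * (s i * (s j * (s 1 * w))))) := by
  simpa only [mul_assoc] using congrArg (· * w) (braid_four_of_braid_three
    (cs.simple_mul_simple_comm hij) (cs.simple_braid hi) (cs.simple_braid hj))

theorem outer_mul_self : π [0, 2, 3] * π [0, 2, 3] = 1 := by
  simp only [CoxeterSystem.wordProd, List.map, List.prod_cons, List.prod_nil, mul_one, mul_assoc]
  rw [comm_assoc 0 2, comm_assoc 0 3, cs.simple_mul_simple_cancel_left, ← mul_assoc (s 3),
    cs.simple_mul_simple_comm (i := 3) (j := 2) (by decide), mul_assoc,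
    cs.simple_mul_simple_cancel_left, cs.simple_mul_simple_self]

theorem braid_six_center_outer : (s 1 * π [0, 2, 3]) ^ 3 = (π [0, 2, 3] * s 1) ^ 3 := by
  simp only [CoxeterSystem.wordProd, List.map, List.prod_cons, List.prod_nil, mul_one]
  refine braid_six_of_braid_three_four ?_ (cs.simple_braid (by decide))
    (braid_four_of_braid_three (cs.simple_mul_simple_comm (by decide))
      (cs.simple_braid (by decide)) (cs.simple_braid (by decide)))
  rw [← mul_assoc, cs.simple_mul_simple_comm (i := 0) (j := 2) (by decide), mul_assoc,
    cs.simple_mul_simple_comm (i := 0) (j := 3) (by decide), mul_assoc]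

theorem isLiftable_ofG₂ : CoxeterMatrix.G₂.IsLiftable ![s 1, π [0, 2, 3]] := by
  intro i j
  fin_cases i <;> fin_cases j
  · simpa using cs.simple_mul_simple_self 1
  · exact pow_two_mul_eq_one_of_pow_eq (cs.simple_mul_simple_self 1) outer_mul_self
      braid_six_center_outer
  · exact pow_two_mul_eq_one_of_pow_eq outer_mul_self (cs.simple_mul_simple_self 1)
      braid_six_center_outer.symm
  · simpa using outer_mul_self

noncomputable def ofG₂ : CoxeterMatrix.G₂.Group →* D4Mat.Group :=
  cs₂.lift ⟨_, isLiftable_ofG₂⟩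

theorem ofG₂_simple (i : Fin 2) : ofG₂ (cs₂.simple i) = ![s 1, π [0, 2, 3]] i :=
  cs₂.lift_apply_simple isLiftable_ofG₂ i

/-- Points `0, 1, 2, 3` stand for `e₁, …, e₄` and `4, …, 7` for `-e₁, …, -e₄`: these are the
reflections in `e₁ - e₂`, `e₂ - e₃`, `e₃ - e₄` and `e₃ + e₄`. -/
def signedPerm : Fin 4 → Equiv.Perm (Fin 8)
  | 0 => Equiv.swap 0 1 * Equiv.swap 4 5
  | 1 => Equiv.swap 1 2 * Equiv.swap 5 6
  | 2 => Equiv.swap 2 3 * Equiv.swap 6 7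
  | 3 => Equiv.swap 2 7 * Equiv.swap 3 6

theorem isLiftable_signedPerm : D4Mat.IsLiftable signedPerm := by
  unfold CoxeterMatrix.IsLiftable; decide

noncomputable def permRep : D4Mat.Group →* Equiv.Perm (Fin 8) :=
  cs.lift ⟨signedPerm, isLiftable_signedPerm⟩

theorem permRep_simple (i : Fin 4) : permRep (s i) = signedPerm i :=
  cs.lift_apply_simple _ i

theorem permRep_wordProd (ω : List (Fin 4)) : permRep (π ω) = (ω.map signedPerm).prod := by
  rw [CoxeterSystem.map_wordProd]
  congr 2

theorem ofG₂_injective : Function.Injective ofG₂ := by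
  set r := cs₂.simple 0 * cs₂.simple 1
  set q := signedPerm 1 * (signedPerm 0 * (signedPerm 2 * signedPerm 3))
  have hr : r ^ (6 : ℤ) = 1 := by exact_mod_cast cs₂.simple_mul_simple_pow 0 1
  have hq : ∀ k : Fin 6, (q ^ (k : ℕ) = 1 → k = 0) ∧ q ^ (k : ℕ) * signedPerm 1 ≠ 1 := by
    decide
  have hpow : ∀ k : ℕ, permRep (ofG₂ (r ^ k)) = q ^ k := fun k => by
    rw [map_pow, map_pow, map_mul, map_mul, ofG₂_simple, ofG₂_simple, Matrix.cons_val_zero,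
      Matrix.cons_val_one, Matrix.cons_val_zero, permRep_simple, permRep_wordProd]
    simp [q]
  refine (injective_iff_map_eq_one _).2 fun w hw => ?_
  obtain ⟨n, rfl | rfl⟩ := cs₂.exists_zpow_or_zpow_mul_simple 0 1 (by decide) w
  all_goals
    obtain ⟨k, hk⟩ : ∃ k : Fin 6, r ^ n = r ^ (k : ℕ) :=
      ⟨⟨(n % 6).toNat, by omega⟩, by
        rw [zpow_eq_zpow_emod n hr, ← zpow_natCast, Int.toNat_of_nonneg (by omega)]⟩
    rw [hk] at hw ⊢
  · have hw' := congrArg permRep hw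
    rw [hpow, map_one] at hw'
    rw [(hq k).1 hw', Fin.val_zero, pow_zero]
  · have hw' := congrArg permRep hw
    rw [map_mul, map_mul, hpow, ofG₂_simple, Matrix.cons_val_zero, permRep_simple,
      map_one] at hw'
    exact absurd hw' (hq k).2

/-- The right action of the simple reflections on the 16 right cosets of `ofG₂.range`, found by
coset enumeration: in the row of `ω`, the entry `(g, ω')` at `i` records
`π (ω ++ [i]) = ofG₂ (cs₂.wordProd g) * π ω'`. -/
def cosetTable : List (List (Fin 4) × (Fin 4 → List (Fin 2) × List (Fin 4))) :=
  [([], ![([], [0]), ([0], []), ([], [2]), ([], [3])]),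
   ([0], ![([], []), ([], [0, 1]), ([1], [3]), ([1], [2])]),
   ([2], ![([1], [3]), ([], [2, 1]), ([], []), ([1], [0])]),
   ([3], ![([1], [2]), ([], [3, 1]), ([1], [0]), ([], [])]),
   ([0, 1], ![([0], [0, 1]), ([], [0]), ([], [0, 1, 2]), ([], [0, 1, 3])]),
   ([2, 1], ![([], [2, 1, 0]), ([], [2]), ([0], [2, 1]), ([], [2, 1, 3])]),
   ([3, 1], ![([], [3, 1, 0]), ([], [3]), ([], [3, 1, 2]), ([0], [3, 1])]),
   ([0, 1, 2], ![([0], [0, 1, 2]), ([1], [3, 1, 2]), ([], [0, 1]), ([], [0, 1, 2, 3])]),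
   ([0, 1, 3], ![([0], [0, 1, 3]), ([1], [2, 1, 3]), ([], [0, 1, 2, 3]), ([], [0, 1])]),
   ([2, 1, 0], ![([], [2, 1]), ([1], [3, 1, 0]), ([0], [2, 1, 0]), ([], [2, 1, 0, 3])]),
   ([2, 1, 3], ![([], [2, 1, 0, 3]), ([1], [0, 1, 3]), ([0], [2, 1, 3]), ([], [2, 1])]),
   ([3, 1, 0], ![([], [3, 1]), ([1], [2, 1, 0]), ([], [3, 1, 0, 2]), ([0], [3, 1, 0])]),
   ([3, 1, 2], ![([], [3, 1, 0, 2]), ([1], [0, 1, 2]), ([], [3, 1]), ([0], [3, 1, 2])]),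
   ([0, 1, 2, 3],
    ![([0], [0, 1, 2, 3]), ([1, 0, 1], [0, 1, 2, 3]), ([], [0, 1, 3]), ([], [0, 1, 2])]),
   ([2, 1, 0, 3],
    ![([], [2, 1, 3]), ([1, 0, 1], [2, 1, 0, 3]), ([0], [2, 1, 0, 3]), ([], [2, 1, 0])]),
   ([3, 1, 0, 2],
    ![([], [3, 1, 2]), ([1, 0, 1], [3, 1, 0, 2]), ([], [3, 1, 0]), ([0], [3, 1, 0, 2])])]

/- Both sides are brought to a normal form: outer letters sorted where they commute, `c x c`
replaced by `x c x`, and `c (x y) c (x y)` by `(x y) c (x y) c` for commuting outer `x, y`. -/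
theorem cosetTable_spec : ∀ row ∈ cosetTable, ∀ i,
    π (row.1 ++ [i]) = ofG₂ (cs₂.wordProd (row.2 i).1) * π (row.2 i).2 := by
  intro row hrow i
  fin_cases hrow <;> fin_cases i <;>
    simp only [Fin.reduceFinMk, Matrix.cons_val, List.cons_append, List.nil_append, map_mul,
      map_one, ofG₂_simple, CoxeterSystem.wordProd, List.map, List.prod_cons, List.prod_nil,
      mul_assoc, one_mul, cs.simple_mul_simple_cancel_left, ← comm_assoc 0 2, ← comm_assoc 0 3,
      ← comm_assoc 2 3, ← braid_assoc 0 1, ← braid_assoc 2 1, ← braid_assoc 3 1,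
      braid_four_assoc 2 3, braid_four_assoc 0 3, braid_four_assoc 0 2]

theorem cosetTable_closed :
    ∀ row ∈ cosetTable, ∀ i, (row.2 i).2 ∈ cosetTable.map Prod.fst := by
  decide

theorem exists_ofG₂_mul_wordProd (w : D4Mat.Group) :
    ∃ g, ∃ row ∈ cosetTable, w = ofG₂ g * π row.1 := by
  induction w using cs.simple_induction_right with
  | one => exact ⟨1, _, List.mem_cons_self, by simp⟩
  | mul_simple_right w i ih =>
    obtain ⟨g, row, hrow, rfl⟩ := ih
    obtain ⟨row', hrow', hrow'_fst⟩ := List.mem_map.1 (cosetTable_closed row hrow i)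
    refine ⟨g * cs₂.wordProd (row.2 i).1, row', hrow', ?_⟩
    rw [mul_assoc, ← cs.wordProd_singleton i, ← cs.wordProd_append, cosetTable_spec row hrow i,
      hrow'_fst, map_mul, mul_assoc]

def triality : Fin 4 → Fin 4 := ![2, 1, 3, 0]

def outerSwap : Fin 4 → Fin 4 := ![2, 1, 0, 3]

theorem eq_nil_of_prod_map_triality_eq : ∀ row ∈ cosetTable,
    ((row.1.map triality).map signedPerm).prod = (row.1.map signedPerm).prod → row.1 = [] := by
  decide

theorem range_ofG₂_le_fixedSubgroup {σ : D4Mat.Group ≃* D4Mat.Group} (h1 : σ (s 1) = s 1)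
    (hP : σ (π [0, 2, 3]) = π [0, 2, 3]) : ofG₂.range ≤ fixedSubgroup σ := by
  have hcomp : σ.toMonoidHom.comp ofG₂ = ofG₂ :=
    cs₂.ext_simple fun i => by fin_cases i <;> simpa [ofG₂_simple]
  rintro _ ⟨g, rfl⟩
  exact DFunLike.congr_fun hcomp g

theorem fixedSubgroup_eq_range_ofG₂ {ρ : D4Mat.Group ≃* D4Mat.Group}
    (hρ : ∀ i, ρ (s i) = s (triality i)) : fixedSubgroup ρ = ofG₂.range := by
  have hP : ρ (π [0, 2, 3]) = π [0, 2, 3] := by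
    rw [cs.map_wordProd_of_simple hρ]
    simp only [triality, List.map, Matrix.cons_val, CoxeterSystem.wordProd, List.prod_cons,
      List.prod_nil]
    rw [comm_assoc 3 0, comm_assoc 2 0]
  refine le_antisymm (fun w hw => ?_) (range_ofG₂_le_fixedSubgroup (hρ 1) hP)
  obtain ⟨g, row, hrow, rfl⟩ := exists_ofG₂_mul_wordProd w
  have hg : ρ (ofG₂ g) = ofG₂ g := range_ofG₂_le_fixedSubgroup (hρ 1) hP ⟨g, rfl⟩
  replace hw : ρ (ofG₂ g) * ρ (π row.1) = ofG₂ g * π row.1 := (map_mul ρ _ _).symm.trans hw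
  rw [hg, cs.map_wordProd_of_simple hρ] at hw
  have hperm := congrArg permRep (mul_left_cancel hw)
  rw [permRep_wordProd, permRep_wordProd] at hperm
  rw [eq_nil_of_prod_map_triality_eq row hrow hperm, cs.wordProd_nil, mul_one]
  exact ⟨g, rfl⟩

theorem range_ofG₂_le_fixedSubgroup_of_outerSwap {τ : D4Mat.Group ≃* D4Mat.Group}
    (hτ : ∀ i, τ (s i) = s (outerSwap i)) : ofG₂.range ≤ fixedSubgroup τ := by
  refine range_ofG₂_le_fixedSubgroup (hτ 1) ?_
  rw [cs.map_wordProd_of_simple hτ]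
  simp only [outerSwap, List.map, Matrix.cons_val, CoxeterSystem.wordProd, List.prod_cons,
    List.prod_nil]
  rw [comm_assoc 2 0]

end D4Mat

theorem fixedSubgroup_D4_triality_iso_G2
    (ρ τ : D4Mat.Group ≃* D4Mat.Group)
    (hρ : ρ (D4Mat.simple 0) = D4Mat.simple 2 ∧ ρ (D4Mat.simple 2) = D4Mat.simple 3 ∧
          ρ (D4Mat.simple 3) = D4Mat.simple 0 ∧ ρ (D4Mat.simple 1) = D4Mat.simple 1)
    (hτ : τ (D4Mat.simple 0) = D4Mat.simple 2 ∧ τ (D4Mat.simple 2) = D4Mat.simple 0 ∧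
          τ (D4Mat.simple 3) = D4Mat.simple 3 ∧ τ (D4Mat.simple 1) = D4Mat.simple 1) :
    fixedSubgroup ρ = fixedSubgroup ρ ⊓ fixedSubgroup τ ∧
    Nonempty ((fixedSubgroup ρ) ≃* CoxeterMatrix.G₂.Group) ∧
    Nonempty ((fixedSubgroup ρ ⊓ fixedSubgroup τ : Subgroup D4Mat.Group) ≃*
      CoxeterMatrix.G₂.Group) := by
  have hρ' : ∀ i, ρ (D4Mat.cs.simple i) = D4Mat.cs.simple (D4Mat.triality i) := by
    intro i; fin_cases i
    exacts [hρ.1, hρ.2.2.2, hρ.2.1, hρ.2.2.1]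
  have hτ' : ∀ i, τ (D4Mat.cs.simple i) = D4Mat.cs.simple (D4Mat.outerSwap i) := by
    intro i; fin_cases i
    exacts [hτ.1, hτ.2.2.2, hτ.2.1, hτ.2.2.1]
  have e : D4Mat.ofG₂.range ≃* CoxeterMatrix.G₂.Group :=
    (MonoidHom.ofInjective D4Mat.ofG₂_injective).symm
  rw [D4Mat.fixedSubgroup_eq_range_ofG₂ hρ',
    inf_eq_left.2 (D4Mat.range_ofG₂_le_fixedSubgroup_of_outerSwap hτ')]
  exact ⟨rfl, ⟨e⟩, ⟨e⟩⟩
end
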